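/- Let (A, m) be a σ-finite measure space, (Ω, P) a probability space, and ξ, η : A × Ω → ℝ two jointly measurable families of random variables (defined on the same probability space, possibly dependent) such that for every t ∈ A the random variables ξ_t and η_t are centered Gaussian with standard deviations σ_t and δ_t respectively, where t ↦ σ_t and t ↦ δ_t are measurable. Set C = ∫_A (σ_t + δ_t) m(dt). If C < ∞, then E exp(∫_A (|ξ_t| + |η_t|) m(dt)) ≤ e^{C²/2} · (2/√(2π)) ∫_{-∞}^{C} e^{-u²/2} du ≤ exp(√(2/π) C + C²/2). -/

import Mathlib

/-!
Put `w_t = σ_t + δ_t` and `N_t = |ξ_t| + |η_t|`. Jensen's inequality for the probability measure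
`(w / C) • m` gives `exp ∫ N dm ≤ ∫ exp (C N_t / w_t) (w_t / C) m(dt)`, so by Tonelli it suffices to
bound `E exp (C N_t / w_t)` uniformly in `t`. Writing `C N_t / w_t` as the convex combination, with
weights `σ_t / w_t` and `δ_t / w_t`, of `C |ξ_t| / σ_t` and `C |η_t| / δ_t`, convexity of `exp`
reduces this to `E exp (C |Z|)` for a standard Gaussian `Z`, which is `e^{C²/2} · 2Φ(C)` with `Φ`
the standard normal distribution function. The last inequality is `Φ(C) ≤ 1/2 + C/√(2π)` together
with `1 + x ≤ eˣ`.
-/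

open MeasureTheory ProbabilityTheory Real Set
open scoped NNReal ENNReal

noncomputable def halfNormalMGF (c : ℝ) : ℝ :=
  exp (c ^ 2 / 2) * (2 / √(2 * π)) * ∫ u in Iic c, exp (-u ^ 2 / 2)

lemma integral_Iic_zero_exp_neg_sq_div_two :
    ∫ u in Iic (0 : ℝ), exp (-u ^ 2 / 2) = √(2 * π) / 2 := by
  have h := integral_gaussian_Ioi (1 / 2)
  rw [show π / (1 / 2) = 2 * π by ring] at h
  have hneg := integral_comp_neg_Ioi (0 : ℝ) fun u ↦ exp (-u ^ 2 / 2)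
  simp only [neg_zero, neg_sq] at hneg
  rw [← hneg, ← h]
  congr with u
  ring_nf

lemma integral_Iic_exp_neg_sq_div_two_le {c : ℝ} (hc : 0 ≤ c) :
    ∫ u in Iic c, exp (-u ^ 2 / 2) ≤ √(2 * π) / 2 + c := by
  have hint : Integrable fun u : ℝ ↦ exp (-u ^ 2 / 2) := by
    simpa [div_eq_inv_mul, neg_mul] using integrable_exp_neg_mul_sq (b := 1 / 2) (by norm_num)
  have hsplit := intervalIntegral.integral_Iic_sub_Iic hint.integrableOn hint.integrableOn
    (a := 0) (b := c) (μ := volume)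
  have hbound : ‖∫ u in (0 : ℝ)..c, exp (-u ^ 2 / 2)‖ ≤ 1 * |c - 0| :=
    intervalIntegral.norm_integral_le_of_norm_le_const fun u _ ↦ by
      rw [norm_of_nonneg (exp_nonneg _), exp_le_one_iff]
      nlinarith [sq_nonneg u]
  rw [integral_Iic_zero_exp_neg_sq_div_two] at hsplit
  rw [sub_zero, abs_of_nonneg hc, one_mul, Real.norm_eq_abs] at hbound
  linarith [(abs_le.1 hbound).2]

lemma two_div_sqrt_two_mul_pi : 2 / √(2 * π) = √(2 / π) := by
  rw [div_eq_iff (by positivity), ← sqrt_mul (by positivity),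
    show 2 / π * (2 * π) = 2 ^ 2 by field_simp, sqrt_sq zero_le_two]

lemma halfNormalMGF_le {c : ℝ} (hc : 0 ≤ c) :
    halfNormalMGF c ≤ exp (√(2 / π) * c + c ^ 2 / 2) := by
  have hI := integral_Iic_exp_neg_sq_div_two_le hc
  calc halfNormalMGF c ≤ exp (c ^ 2 / 2) * (2 / √(2 * π)) * (√(2 * π) / 2 + c) := by
        unfold halfNormalMGF; gcongr
    _ = exp (c ^ 2 / 2) * (√(2 / π) * c + 1) := by
        rw [← two_div_sqrt_two_mul_pi]; field_simp; ring
    _ ≤ exp (c ^ 2 / 2) * exp (√(2 / π) * c) := by gcongr; exact add_one_le_exp _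
    _ = exp (√(2 / π) * c + c ^ 2 / 2) := by rw [← exp_add, add_comm]

lemma integral_Ioi_zero_exp_neg_sq_sub (c : ℝ) :
    ∫ x in Ioi 0, exp (-(c - x) ^ 2 / 2) = ∫ u in Iic c, exp (-u ^ 2 / 2) := by
  have h := (volume.measurePreserving_sub_left c).setIntegral_preimage_emb
    (measurableEmbedding_subLeft c) (fun u ↦ exp (-u ^ 2 / 2)) (Iio c)
  rw [integral_Iic_eq_integral_Iio, ← h]
  congr with x
  simp

lemma integral_exp_mul_abs_gaussianReal (c : ℝ) :
    ∫ x, exp (c * |x|) ∂gaussianReal 0 1 = halfNormalMGF c := by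
  have hpdf (x : ℝ) : gaussianPDFReal 0 1 x * exp (c * x)
      = (√(2 * π))⁻¹ * exp (c ^ 2 / 2) * exp (-(c - x) ^ 2 / 2) := by
    simp only [gaussianPDFReal, NNReal.coe_one, mul_one, sub_zero, mul_assoc, ← exp_add]
    ring_nf
  calc ∫ x, exp (c * |x|) ∂gaussianReal 0 1
      = ∫ x, (fun y ↦ gaussianPDFReal 0 1 y * exp (c * y)) |x| := by
        rw [integral_gaussianReal_eq_integral_smul one_ne_zero]
        congr with x
        simp [gaussianPDFReal]
    _ = 2 * ((√(2 * π))⁻¹ * exp (c ^ 2 / 2) * ∫ x in Ioi 0, exp (-(c - x) ^ 2 / 2)) := by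
        rw [integral_comp_abs (f := fun y ↦ gaussianPDFReal 0 1 y * exp (c * y))]
        simp_rw [hpdf, integral_const_mul]
    _ = halfNormalMGF c := by
        rw [integral_Ioi_zero_exp_neg_sq_sub, halfNormalMGF]; ring

lemma integrable_exp_mul_abs_gaussianReal (μ : ℝ) (v : ℝ≥0) (c : ℝ) :
    Integrable (fun x ↦ exp (c * |x|)) (gaussianReal μ v) := by
  refine ((integrable_exp_mul_gaussianReal c).add (integrable_exp_mul_gaussianReal (-c))).mono'
    (by fun_prop) (ae_of_all _ fun x ↦ ?_)
  rw [norm_of_nonneg (exp_nonneg _), Pi.add_apply]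
  rcases abs_cases x with ⟨hx, -⟩ | ⟨hx, -⟩ <;> rw [hx]
  · linarith [exp_nonneg (-c * x)]
  · rw [mul_neg, ← neg_mul]
    linarith [exp_nonneg (c * x)]

lemma one_le_halfNormalMGF {c : ℝ} (hc : 0 ≤ c) : 1 ≤ halfNormalMGF c := by
  rw [← integral_exp_mul_abs_gaussianReal]
  calc (1 : ℝ) = ∫ _, 1 ∂gaussianReal 0 1 := by simp
    _ ≤ ∫ x, exp (c * |x|) ∂gaussianReal 0 1 :=
        integral_mono (integrable_const 1) (integrable_exp_mul_abs_gaussianReal 0 1 c)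
          fun x ↦ one_le_exp (by positivity)

lemma lintegral_exp_mul_abs_gaussianReal (s : ℝ≥0) (c : ℝ) :
    ∫⁻ x, ENNReal.ofReal (exp (c * |x|)) ∂gaussianReal 0 (s ^ 2)
      = ENNReal.ofReal (halfNormalMGF (c * s)) := by
  have hscale : gaussianReal 0 (s ^ 2) = (gaussianReal 0 1).map (fun y ↦ (s : ℝ) * y) := by
    rw [gaussianReal_map_const_mul, mul_zero, mul_one]
    congr 1
  rw [hscale, lintegral_map (by fun_prop) (by fun_prop), ← integral_exp_mul_abs_gaussianReal,
    ofReal_integral_eq_lintegral_ofReal (integrable_exp_mul_abs_gaussianReal 0 1 _)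
      (ae_of_all _ fun _ ↦ exp_nonneg _)]
  simp only [abs_mul, NNReal.abs_eq, mul_assoc]

section GaussianVariable

variable {Ω : Type*} [MeasurableSpace Ω] {P : Measure Ω} {X : Ω → ℝ} {s : ℝ≥0}

lemma ae_eq_zero_of_map_eq_gaussianReal (hX : Measurable X)
    (hlaw : P.map X = gaussianReal 0 (s ^ 2)) : ∀ᵐ ω ∂P, s = 0 → X ω = 0 := by
  refine ae_of_ae_map (p := fun x ↦ s = 0 → x = 0) hX.aemeasurable ?_
  rw [hlaw]
  rcases eq_or_ne s 0 with rfl | hs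
  · simp [gaussianReal_zero_var]
  · exact ae_of_all _ fun _ h ↦ absurd h hs

lemma lintegral_exp_mul_abs_of_map_eq_gaussianReal (hX : Measurable X)
    (hlaw : P.map X = gaussianReal 0 (s ^ 2)) (c : ℝ) :
    ∫⁻ ω, ENNReal.ofReal (exp (c * |X ω|)) ∂P = ENNReal.ofReal (halfNormalMGF (c * s)) := by
  rw [← lintegral_exp_mul_abs_gaussianReal, ← hlaw, lintegral_map (by fun_prop) hX]

end GaussianVariable

lemma lintegral_exp_abs_add_abs_le {Ω : Type*} [MeasurableSpace Ω] {P : Measure Ω}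
    {X Y : Ω → ℝ} {s d : ℝ≥0} (hX : Measurable X) (hY : Measurable Y)
    (hXlaw : P.map X = gaussianReal 0 (s ^ 2)) (hYlaw : P.map Y = gaussianReal 0 (d ^ 2))
    (hsd : s + d ≠ 0) (C : ℝ) :
    ∫⁻ ω, ENNReal.ofReal (exp (C * (|X ω| + |Y ω|) / (s + d : ℝ≥0))) ∂P
      ≤ ENNReal.ofReal (halfNormalMGF C) := by
  have hsd' : (s + d : ℝ) ≠ 0 := mod_cast hsd
  set a : ℝ := s / (s + d)
  set b : ℝ := d / (s + d)
  have hab : a + b = 1 := by rw [← add_div, div_self hsd']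
  -- `C / 0 = 0` is harmless: a component with zero variance vanishes a.s.
  have hweight (r : ℝ≥0) (x : ℝ) (hx : r = 0 → x = 0) :
      r / (s + d) * (C / r * |x|) = C * |x| / (s + d) := by
    rcases eq_or_ne r 0 with rfl | hr
    · simp [hx rfl]
    · field_simp
  have hmgf (r : ℝ≥0) : ENNReal.ofReal (r / (s + d)) * ENNReal.ofReal (halfNormalMGF (C / r * r))
      = ENNReal.ofReal (r / (s + d)) * ENNReal.ofReal (halfNormalMGF C) := by
    rcases eq_or_ne r 0 with rfl | hr
    · simp
    · rw [div_mul_cancel₀ _ (mod_cast hr)]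
  have hconvex : ∀ᵐ ω ∂P, ENNReal.ofReal (exp (C * (|X ω| + |Y ω|) / (s + d : ℝ≥0)))
      ≤ ENNReal.ofReal a * ENNReal.ofReal (exp (C / s * |X ω|))
        + ENNReal.ofReal b * ENNReal.ofReal (exp (C / d * |Y ω|)) := by
    filter_upwards [ae_eq_zero_of_map_eq_gaussianReal hX hXlaw,
      ae_eq_zero_of_map_eq_gaussianReal hY hYlaw] with ω hXω hYω
    have ha : 0 ≤ a := by positivity
    have hb : 0 ≤ b := by positivity
    rw [← ENNReal.ofReal_mul ha, ← ENNReal.ofReal_mul hb, ← ENNReal.ofReal_add (by positivity)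
      (by positivity)]
    refine ENNReal.ofReal_le_ofReal ?_
    have := convexOn_exp.2 (mem_univ (C / s * |X ω|)) (mem_univ (C / d * |Y ω|)) ha hb hab
    simp only [smul_eq_mul] at this
    rwa [hweight s _ hXω, hweight d _ hYω, ← add_div, ← mul_add, ← NNReal.coe_add] at this
  calc ∫⁻ ω, ENNReal.ofReal (exp (C * (|X ω| + |Y ω|) / (s + d : ℝ≥0))) ∂P
      ≤ ∫⁻ ω, (ENNReal.ofReal a * ENNReal.ofReal (exp (C / s * |X ω|))
          + ENNReal.ofReal b * ENNReal.ofReal (exp (C / d * |Y ω|))) ∂P := lintegral_mono_ae hconvex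
    _ = ENNReal.ofReal a * ENNReal.ofReal (halfNormalMGF C)
          + ENNReal.ofReal b * ENNReal.ofReal (halfNormalMGF C) := by
        rw [lintegral_add_left (by fun_prop), lintegral_const_mul _ (by fun_prop),
          lintegral_const_mul _ (by fun_prop),
          lintegral_exp_mul_abs_of_map_eq_gaussianReal hX hXlaw,
          lintegral_exp_mul_abs_of_map_eq_gaussianReal hY hYlaw, hmgf, hmgf]
    _ = ENNReal.ofReal (halfNormalMGF C) := by
        rw [← add_mul, ← ENNReal.ofReal_add (by positivity) (by positivity), hab,
          ENNReal.ofReal_one, one_mul]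

lemma ofReal_exp_integral_le_lintegral {α : Type*} [MeasurableSpace α] {ν : Measure α}
    [IsProbabilityMeasure ν] {f : α → ℝ} (hf : Measurable f) (hf0 : 0 ≤ f) :
    ENNReal.ofReal (exp (∫ a, f a ∂ν)) ≤ ∫⁻ a, ENNReal.ofReal (exp (f a)) ∂ν := by
  by_cases htop : ∫⁻ a, ENNReal.ofReal (exp (f a)) ∂ν = ∞
  · exact htop ▸ le_top
  have hexp : Integrable (fun a ↦ exp (f a)) ν :=
    ⟨by fun_prop, (hasFiniteIntegral_iff_ofReal (ae_of_all _ fun _ ↦ exp_nonneg _)).2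
      (lt_top_iff_ne_top.2 htop)⟩
  have hfi : Integrable f ν := hexp.mono' hf.aestronglyMeasurable (ae_of_all _ fun a ↦ by
    rw [norm_of_nonneg (hf0 a)]
    linarith [add_one_le_exp (f a)])
  rw [← ofReal_integral_eq_lintegral_ofReal hexp (ae_of_all _ fun _ ↦ exp_nonneg _)]
  exact ENNReal.ofReal_le_ofReal <| convexOn_exp.map_integral_le continuousOn_exp isClosed_univ
    (ae_of_all _ fun _ ↦ mem_univ _) hfi hexp

section WeightedFamily

variable {A Ω : Type*} [MeasurableSpace A] [MeasurableSpace Ω] {m : Measure A} {P : Measure Ω}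
  {N : A → Ω → ℝ} {w : A → ℝ≥0}

lemma ae_ae_eq_zero_of_weight_eq_zero [SFinite m] [SFinite P] (hN : Measurable (Function.uncurry N))
    (hw : Measurable w) (hdeg : ∀ t, w t = 0 → ∀ᵐ ω ∂P, N t ω = 0) :
    ∀ᵐ ω ∂P, ∀ᵐ t ∂m, w t = 0 → N t ω = 0 := by
  refine (Measure.ae_ae_comm ?_).1 (ae_of_all _ fun t ↦ ?_)
  · measurability
  · rcases eq_or_ne (w t) 0 with h | h
    · filter_upwards [hdeg t h] with ω hω using fun _ ↦ hω
    · exact ae_of_all _ fun _ h' ↦ absurd h' h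

lemma isProbabilityMeasure_withDensity_div (hwi : Integrable (fun t ↦ (w t : ℝ)) m) {C : ℝ}
    (hC : ∫ t, (w t : ℝ) ∂m = C) (hCpos : 0 < C) :
    IsProbabilityMeasure (m.withDensity fun t ↦ (w t / C.toNNReal : ℝ≥0)) := by
  have hρ (t : A) : ((w t / C.toNNReal : ℝ≥0) : ℝ) = w t / C := by simp [hCpos.le]
  refine ⟨?_⟩
  rw [withDensity_apply _ MeasurableSet.univ, Measure.restrict_univ,
    lintegral_coe_eq_integral _ (by simpa only [hρ] using hwi.div_const C)]
  simp only [hρ, integral_div, hC, div_self hCpos.ne', ENNReal.ofReal_one]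

lemma integral_eq_integral_withDensity_div (hw : Measurable w) {C : ℝ} (hCpos : 0 < C)
    {f : A → ℝ} (hf : ∀ᵐ t ∂m, w t = 0 → f t = 0) :
    ∫ t, f t ∂m = ∫ t, C * f t / w t ∂m.withDensity fun t ↦ (w t / C.toNNReal : ℝ≥0) := by
  rw [integral_withDensity_eq_integral_smul (by fun_prop)]
  refine integral_congr_ae ?_
  filter_upwards [hf] with t ht
  rcases eq_or_ne (w t) 0 with h | h
  · simp [h, ht h]
  · rw [NNReal.smul_def, smul_eq_mul, NNReal.coe_div, Real.coe_toNNReal _ hCpos.le]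
    field_simp

theorem lintegral_exp_integral_le_of_weight [SFinite m] [IsProbabilityMeasure P]
    (hN : Measurable (Function.uncurry N)) (hN0 : ∀ t ω, 0 ≤ N t ω) (hw : Measurable w)
    (hwi : Integrable (fun t ↦ (w t : ℝ)) m) {C : ℝ} (hC : ∫ t, (w t : ℝ) ∂m = C)
    (hdeg : ∀ t, w t = 0 → ∀ᵐ ω ∂P, N t ω = 0) {K : ℝ≥0∞} (hK1 : 1 ≤ K)
    (hK : ∀ t, w t ≠ 0 → ∫⁻ ω, ENNReal.ofReal (exp (C * N t ω / w t)) ∂P ≤ K) :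
    ∫⁻ ω, ENNReal.ofReal (exp (∫ t, N t ω ∂m)) ∂P ≤ K := by
  have hdeg' := ae_ae_eq_zero_of_weight_eq_zero (m := m) hN hw hdeg
  rcases (hC ▸ integral_nonneg fun t ↦ (w t).coe_nonneg : 0 ≤ C).eq_or_lt with rfl | hCpos
  · have hw0 : ∀ᵐ t ∂m, w t = 0 := by
      filter_upwards [(integral_eq_zero_iff_of_nonneg (fun t ↦ (w t).coe_nonneg) hwi).1 hC]
        with t ht using by simpa using ht
    calc ∫⁻ ω, ENNReal.ofReal (exp (∫ t, N t ω ∂m)) ∂P = ∫⁻ _, 1 ∂P := by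
          refine lintegral_congr_ae ?_
          filter_upwards [hdeg'] with ω hω
          rw [integral_eq_zero_of_ae (by filter_upwards [hw0, hω] with t h1 h2 using h2 h1),
            exp_zero, ENNReal.ofReal_one]
      _ ≤ K := by simpa using hK1
  set ν := m.withDensity fun t ↦ (w t / C.toNNReal : ℝ≥0)
  have := isProbabilityMeasure_withDensity_div hwi hC hCpos
  have hJensen : ∀ᵐ ω ∂P, ENNReal.ofReal (exp (∫ t, N t ω ∂m))
      ≤ ∫⁻ t, ENNReal.ofReal (exp (C * N t ω / w t)) ∂ν := by
    filter_upwards [hdeg'] with ω hω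
    rw [integral_eq_integral_withDensity_div hw hCpos hω]
    exact ofReal_exp_integral_le_lintegral (by fun_prop) fun t ↦ by
      have := hN0 t ω
      positivity
  have hνw : ∀ᵐ t ∂ν, w t ≠ 0 := by
    rw [ae_withDensity_iff (by fun_prop)]
    exact ae_of_all _ fun t ht h ↦ ht (by simp [h])
  calc ∫⁻ ω, ENNReal.ofReal (exp (∫ t, N t ω ∂m)) ∂P
      ≤ ∫⁻ ω, ∫⁻ t, ENNReal.ofReal (exp (C * N t ω / w t)) ∂ν ∂P := lintegral_mono_ae hJensen
    _ = ∫⁻ t, ∫⁻ ω, ENNReal.ofReal (exp (C * N t ω / w t)) ∂P ∂ν :=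
        lintegral_lintegral_swap (Measurable.aemeasurable <| by
          have := hN.comp measurable_swap
          fun_prop)
    _ ≤ ∫⁻ _, K ∂ν := lintegral_mono_ae (hνw.mono hK)
    _ = K := by simp

end WeightedFamily

/-- Two jointly measurable families `ξ, η` (on the same probability space,
possibly dependent) of centered Gaussian random variables with standard deviations `σ t`, `δ t`.
Set `C = ∫_A (σ_t + δ_t) m(dt)`.  If `C < ∞`, then
`E exp (∫_A (|ξ_t| + |η_t|) m(dt)) ≤ e^{C²/2} (2/√(2π)) ∫_{-∞}^C e^{-u²/2} du
  ≤ exp (√(2/π) C + C²/2)`. -/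
theorem stmt2
    {A : Type*} [MeasurableSpace A] (m : Measure A) [SigmaFinite m]
    {Ω : Type*} [MeasurableSpace Ω] (P : Measure Ω) [IsProbabilityMeasure P]
    (ξ η : A → Ω → ℝ)
    (hξ : Measurable (Function.uncurry ξ)) (hη : Measurable (Function.uncurry η))
    (σ δ : A → ℝ≥0) (hσ : Measurable σ) (hδ : Measurable δ)
    (hGaussξ : ∀ t, P.map (ξ t) = gaussianReal 0 (σ t ^ 2))
    (hGaussη : ∀ t, P.map (η t) = gaussianReal 0 (δ t ^ 2))
    (hint : Integrable (fun t => (σ t : ℝ) + (δ t : ℝ)) m)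
    (C : ℝ) (hC : C = ∫ t, ((σ t : ℝ) + (δ t : ℝ)) ∂m) :
    (∫⁻ ω, ENNReal.ofReal (Real.exp (∫ t, (|ξ t ω| + |η t ω|) ∂m)) ∂P)
      ≤ ENNReal.ofReal (Real.exp (C ^ 2 / 2) * (2 / Real.sqrt (2 * π)) *
          ∫ u in Set.Iic C, Real.exp (-u ^ 2 / 2)) ∧
    Real.exp (C ^ 2 / 2) * (2 / Real.sqrt (2 * π)) * (∫ u in Set.Iic C, Real.exp (-u ^ 2 / 2))
      ≤ Real.exp (Real.sqrt (2 / π) * C + C ^ 2 / 2) := by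
  have hC0 : 0 ≤ C := hC ▸ integral_nonneg fun t ↦ by positivity
  refine ⟨?_, halfNormalMGF_le hC0⟩
  refine lintegral_exp_integral_le_of_weight (N := fun t ω ↦ |ξ t ω| + |η t ω|) (w := σ + δ)
    (hξ.abs.add hη.abs) (fun _ _ ↦ by positivity) (hσ.add hδ) (by simpa using hint)
    (by simpa using hC.symm) (fun t ht ↦ ?_) (ENNReal.one_le_ofReal.2 (one_le_halfNormalMGF hC0))
    fun t ht ↦ lintegral_exp_abs_add_abs_le hξ.of_uncurry_left hη.of_uncurry_left
      (hGaussξ t) (hGaussη t) ht C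
  obtain ⟨hσt, hδt⟩ := add_eq_zero.1 ht
  filter_upwards [ae_eq_zero_of_map_eq_gaussianReal hξ.of_uncurry_left (hGaussξ t),
    ae_eq_zero_of_map_eq_gaussianReal hη.of_uncurry_left (hGaussη t)] with ω hξω hηω
  simp [hξω hσt, hηω hδt]
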